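/- arXiv:1803.01351 — 2 statements merged into one kernel-verified Lean document; each statement's English description precedes it below -/
import Mathlib

section
/- Consider the semi-discrete elasto-acoustic system in algebraic form: real matrices M₁, M₂, M₃, A_e of size n×n and M_a, A_a of size m×m, and a coupling matrix C_e of size n×m, with M₁, M₃, A_e, M_a, A_a symmetric; twice differentiable functions U : [0,T] → ℝⁿ and Φ : [0,T] → ℝᵐ satisfy M₁ Ü(t) + M₂ U̇(t) + (M₃ + A_e) U(t) + C_e Φ̇(t) = 0 and M_a Φ̈(t) + A_a Φ(t) − C_eᵀ U̇(t) = 0 for all t ∈ [0,T]. Define the energy E(t) = U̇(t)ᵀM₁U̇(t) + U(t)ᵀM₃U(t) + U(t)ᵀA_eU(t) + Φ̇(t)ᵀM_aΦ̇(t) + Φ(t)ᵀA_aΦ(t). If M₂ is positive semidefinite, then E is nonincreasing on [0,T]; in particular E(t) ≤ E(0) for all t ∈ [0,T]. -/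
open Set Matrix

/-!
Pairing the elastic equation with `U̇` and the acoustic one with `Φ̇` and adding them, the coupling
terms `U̇ᵀ C_e Φ̇` and `−Φ̇ᵀ C_eᵀ U̇` cancel, and what remains is `E'/2 = −U̇ᵀ M₂ U̇ ≤ 0`
(symmetry of the other matrices turns each pairing into half the derivative of a quadratic form).
A function with nonpositive derivative on an interval is antitone there.
-/

section Calculus

variable {𝕜 : Type*} [NontriviallyNormedField 𝕜] {ι : Type*} [Fintype ι]
  {f : 𝕜 → ι → 𝕜} {f' : ι → 𝕜} {t : 𝕜}

theorem HasDerivAt.dotProduct {g : 𝕜 → ι → 𝕜} {g' : ι → 𝕜}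
    (hf : HasDerivAt f f' t) (hg : HasDerivAt g g' t) :
    HasDerivAt (fun s => f s ⬝ᵥ g s) (f' ⬝ᵥ g t + f t ⬝ᵥ g') t := by
  have hfi := hasDerivAt_pi.mp hf
  have hgi := hasDerivAt_pi.mp hg
  simpa only [_root_.dotProduct, ← Finset.sum_add_distrib] using
    HasDerivAt.fun_sum (u := Finset.univ) fun i _ => (hfi i).fun_mul (hgi i)

theorem HasDerivAt.mulVec {κ : Type*} (A : Matrix κ ι 𝕜) (hf : HasDerivAt f f' t) :
    HasDerivAt (fun s => A *ᵥ f s) (A *ᵥ f') t :=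
  hasDerivAt_pi.mpr fun i => by
    simpa only [Matrix.mulVec, _root_.dotProduct] using
      HasDerivAt.fun_sum fun j _ => ((hasDerivAt_pi.mp hf) j).const_mul (A i j)

theorem HasDerivAt.dotProduct_mulVec_self {M : Matrix ι ι 𝕜} (hM : M.IsSymm)
    (hf : HasDerivAt f f' t) :
    HasDerivAt (fun s => f s ⬝ᵥ M *ᵥ f s) (2 * (f' ⬝ᵥ M *ᵥ f t)) t := by
  have hsymm : f t ⬝ᵥ M *ᵥ f' = f' ⬝ᵥ M *ᵥ f t := by
    rw [← dotProduct_transpose_mulVec, hM.eq]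
  simpa only [hsymm, two_mul] using hf.dotProduct (hf.mulVec M)

end Calculus

theorem antitoneOn_of_hasDerivAt_nonpos {D : Set ℝ} (hD : Convex ℝ D) {f f' : ℝ → ℝ}
    (hf : ∀ t ∈ D, HasDerivAt f (f' t) t) (hf' : ∀ t ∈ interior D, f' t ≤ 0) :
    AntitoneOn f D :=
  antitoneOn_of_deriv_nonpos hD (fun t ht => (hf t ht).continuousAt.continuousWithinAt)
    (fun t ht => (hf t (interior_subset ht)).differentiableAt.differentiableWithinAt)
    (fun t ht => (hf t (interior_subset ht)).deriv ▸ hf' t ht)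

section ElastoAcoustic

variable {ι κ : Type*} [Fintype ι] [Fintype κ]

theorem elastoAcoustic_power_balance {M₁ M₂ M₃ Ae : Matrix ι ι ℝ} {Ma Aa : Matrix κ κ ℝ}
    {Ce : Matrix ι κ ℝ} {u u' u'' : ι → ℝ} {φ φ' φ'' : κ → ℝ}
    (hode₁ : M₁ *ᵥ u'' + M₂ *ᵥ u' + (M₃ + Ae) *ᵥ u + Ce *ᵥ φ' = 0)
    (hode₂ : Ma *ᵥ φ'' + Aa *ᵥ φ - Ceᵀ *ᵥ u' = 0) :
    u' ⬝ᵥ M₁ *ᵥ u'' + u' ⬝ᵥ M₃ *ᵥ u + u' ⬝ᵥ Ae *ᵥ u + φ' ⬝ᵥ Ma *ᵥ φ'' + φ' ⬝ᵥ Aa *ᵥ φ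
      = -(u' ⬝ᵥ M₂ *ᵥ u') := by
  have elastic := congrArg (u' ⬝ᵥ ·) hode₁
  have acoustic := congrArg (φ' ⬝ᵥ ·) hode₂
  simp only [dotProduct_add, dotProduct_sub, add_mulVec, dotProduct_zero,
    dotProduct_transpose_mulVec] at elastic acoustic
  linarith

def elastoAcousticEnergy (M₁ M₃ Ae : Matrix ι ι ℝ) (Ma Aa : Matrix κ κ ℝ)
    (U U' : ℝ → ι → ℝ) (Φ Φ' : ℝ → κ → ℝ) (s : ℝ) : ℝ :=
  U' s ⬝ᵥ (M₁ *ᵥ U' s) + U s ⬝ᵥ (M₃ *ᵥ U s) + U s ⬝ᵥ (Ae *ᵥ U s)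
    + Φ' s ⬝ᵥ (Ma *ᵥ Φ' s) + Φ s ⬝ᵥ (Aa *ᵥ Φ s)

theorem hasDerivAt_elastoAcousticEnergy {M₁ M₂ M₃ Ae : Matrix ι ι ℝ} {Ma Aa : Matrix κ κ ℝ}
    {Ce : Matrix ι κ ℝ} (hM₁ : M₁.IsSymm) (hM₃ : M₃.IsSymm) (hAe : Ae.IsSymm)
    (hMa : Ma.IsSymm) (hAa : Aa.IsSymm) {U U' : ℝ → ι → ℝ} {Φ Φ' : ℝ → κ → ℝ}
    {U'' : ι → ℝ} {Φ'' : κ → ℝ} {t : ℝ}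
    (hU : HasDerivAt U (U' t) t) (hU' : HasDerivAt U' U'' t)
    (hΦ : HasDerivAt Φ (Φ' t) t) (hΦ' : HasDerivAt Φ' Φ'' t)
    (hode₁ : M₁ *ᵥ U'' + M₂ *ᵥ U' t + (M₃ + Ae) *ᵥ U t + Ce *ᵥ Φ' t = 0)
    (hode₂ : Ma *ᵥ Φ'' + Aa *ᵥ Φ t - Ceᵀ *ᵥ U' t = 0) :
    HasDerivAt (elastoAcousticEnergy M₁ M₃ Ae Ma Aa U U' Φ Φ')
      (-(2 * (U' t ⬝ᵥ M₂ *ᵥ U' t))) t := by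
  have hderiv := ((((hU'.dotProduct_mulVec_self hM₁).add (hU.dotProduct_mulVec_self hM₃)).add
    (hU.dotProduct_mulVec_self hAe)).add (hΦ'.dotProduct_mulVec_self hMa)).add
    (hΦ.dotProduct_mulVec_self hAa)
  rw [← dotProduct_transpose_mulVec M₁, ← dotProduct_transpose_mulVec Ma, hM₁.eq, hMa.eq,
    ← mul_add, ← mul_add, ← mul_add, ← mul_add, elastoAcoustic_power_balance hode₁ hode₂,
    mul_neg] at hderiv
  exact hderiv

end ElastoAcoustic

theorem semidiscrete_energy_dissipation_general
    {n m : ℕ} (T : ℝ)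
    (M₁ M₂ M₃ Ae : Matrix (Fin n) (Fin n) ℝ)
    (Ma Aa : Matrix (Fin m) (Fin m) ℝ)
    (Ce : Matrix (Fin n) (Fin m) ℝ)
    (hM₁ : M₁.IsSymm) (hM₃ : M₃.IsSymm) (hAe : Ae.IsSymm)
    (hMa : Ma.IsSymm) (hAa : Aa.IsSymm)
    (hM₂psd : ∀ x : Fin n → ℝ, 0 ≤ x ⬝ᵥ (M₂ *ᵥ x))
    (U U' U'' : ℝ → Fin n → ℝ) (Φ Φ' Φ'' : ℝ → Fin m → ℝ)
    (hU' : ∀ t ∈ Icc (0 : ℝ) T, HasDerivAt U (U' t) t)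
    (hU'' : ∀ t ∈ Icc (0 : ℝ) T, HasDerivAt U' (U'' t) t)
    (hΦ' : ∀ t ∈ Icc (0 : ℝ) T, HasDerivAt Φ (Φ' t) t)
    (hΦ'' : ∀ t ∈ Icc (0 : ℝ) T, HasDerivAt Φ' (Φ'' t) t)
    (hode₁ : ∀ t ∈ Icc (0 : ℝ) T,
      M₁ *ᵥ U'' t + M₂ *ᵥ U' t + (M₃ + Ae) *ᵥ U t + Ce *ᵥ Φ' t = 0)
    (hode₂ : ∀ t ∈ Icc (0 : ℝ) T,
      Ma *ᵥ Φ'' t + Aa *ᵥ Φ t - Ceᵀ *ᵥ U' t = 0) :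
    AntitoneOn
      (fun s => U' s ⬝ᵥ (M₁ *ᵥ U' s) + U s ⬝ᵥ (M₃ *ᵥ U s) + U s ⬝ᵥ (Ae *ᵥ U s)
        + Φ' s ⬝ᵥ (Ma *ᵥ Φ' s) + Φ s ⬝ᵥ (Aa *ᵥ Φ s)) (Icc (0 : ℝ) T) ∧
    ∀ t ∈ Icc (0 : ℝ) T,
      U' t ⬝ᵥ (M₁ *ᵥ U' t) + U t ⬝ᵥ (M₃ *ᵥ U t) + U t ⬝ᵥ (Ae *ᵥ U t)
        + Φ' t ⬝ᵥ (Ma *ᵥ Φ' t) + Φ t ⬝ᵥ (Aa *ᵥ Φ t)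
      ≤ U' 0 ⬝ᵥ (M₁ *ᵥ U' 0) + U 0 ⬝ᵥ (M₃ *ᵥ U 0) + U 0 ⬝ᵥ (Ae *ᵥ U 0)
        + Φ' 0 ⬝ᵥ (Ma *ᵥ Φ' 0) + Φ 0 ⬝ᵥ (Aa *ᵥ Φ 0) := by
  have hE : AntitoneOn (elastoAcousticEnergy M₁ M₃ Ae Ma Aa U U' Φ Φ') (Icc 0 T) :=
    antitoneOn_of_hasDerivAt_nonpos (convex_Icc 0 T)
      (fun t ht => hasDerivAt_elastoAcousticEnergy hM₁ hM₃ hAe hMa hAa (hU' t ht) (hU'' t ht)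
        (hΦ' t ht) (hΦ'' t ht) (hode₁ t ht) (hode₂ t ht))
      (fun t _ => neg_nonpos.mpr (mul_nonneg zero_le_two (hM₂psd (U' t))))
  exact ⟨hE, fun t ht => hE ⟨le_rfl, ht.1.trans ht.2⟩ ht ht.1⟩

/-- With zero external loads and a positive semidefinite damping
matrix `M₂`, the discrete energy
`E(t) = U̇ᵀM₁U̇ + UᵀM₃U + UᵀA_eU + Φ̇ᵀM_aΦ̇ + ΦᵀA_aΦ`
of the semi-discrete elasto-acoustic system is nonincreasing on `[0,T]`;
in particular `E(t) ≤ E(0)` for all `t ∈ [0,T]`. -/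
theorem semidiscrete_energy_dissipation
    {n m : ℕ} (T : ℝ) (hT : 0 < T)
    (M₁ M₂ M₃ Ae : Matrix (Fin n) (Fin n) ℝ)
    (Ma Aa : Matrix (Fin m) (Fin m) ℝ)
    (Ce : Matrix (Fin n) (Fin m) ℝ)
    (hM₁ : M₁.IsSymm) (hM₃ : M₃.IsSymm) (hAe : Ae.IsSymm)
    (hMa : Ma.IsSymm) (hAa : Aa.IsSymm)
    (hM₂psd : ∀ x : Fin n → ℝ, 0 ≤ x ⬝ᵥ (M₂ *ᵥ x))
    (U U' U'' : ℝ → Fin n → ℝ) (Φ Φ' Φ'' : ℝ → Fin m → ℝ)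
    (hU' : ∀ t ∈ Icc (0 : ℝ) T, HasDerivAt U (U' t) t)
    (hU'' : ∀ t ∈ Icc (0 : ℝ) T, HasDerivAt U' (U'' t) t)
    (hΦ' : ∀ t ∈ Icc (0 : ℝ) T, HasDerivAt Φ (Φ' t) t)
    (hΦ'' : ∀ t ∈ Icc (0 : ℝ) T, HasDerivAt Φ' (Φ'' t) t)
    (hode₁ : ∀ t ∈ Icc (0 : ℝ) T,
      M₁ *ᵥ U'' t + M₂ *ᵥ U' t + (M₃ + Ae) *ᵥ U t + Ce *ᵥ Φ' t = 0)
    (hode₂ : ∀ t ∈ Icc (0 : ℝ) T,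
      Ma *ᵥ Φ'' t + Aa *ᵥ Φ t - Ceᵀ *ᵥ U' t = 0) :
    AntitoneOn
      (fun s => U' s ⬝ᵥ (M₁ *ᵥ U' s) + U s ⬝ᵥ (M₃ *ᵥ U s) + U s ⬝ᵥ (Ae *ᵥ U s)
        + Φ' s ⬝ᵥ (Ma *ᵥ Φ' s) + Φ s ⬝ᵥ (Aa *ᵥ Φ s)) (Icc (0 : ℝ) T) ∧
    ∀ t ∈ Icc (0 : ℝ) T,
      U' t ⬝ᵥ (M₁ *ᵥ U' t) + U t ⬝ᵥ (M₃ *ᵥ U t) + U t ⬝ᵥ (Ae *ᵥ U t)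
        + Φ' t ⬝ᵥ (Ma *ᵥ Φ' t) + Φ t ⬝ᵥ (Aa *ᵥ Φ t)
      ≤ U' 0 ⬝ᵥ (M₁ *ᵥ U' 0) + U 0 ⬝ᵥ (M₃ *ᵥ U 0) + U 0 ⬝ᵥ (Ae *ᵥ U 0)
        + Φ' 0 ⬝ᵥ (Ma *ᵥ Φ' 0) + Φ 0 ⬝ᵥ (Aa *ᵥ Φ 0) :=
  semidiscrete_energy_dissipation_general T M₁ M₂ M₃ Ae Ma Aa Ce hM₁ hM₃ hAe hMa hAa hM₂psd U U' U''
    Φ Φ' Φ'' hU' hU'' hΦ' hΦ'' hode₁ hode₂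
end

section
/- Let V be a real vector space, let H and G be real inner product spaces, and let e : V → H and s, j : V → G be linear maps such that ‖s(v)‖ ≤ ε‖e(v)‖ for all v ∈ V, where 0 ≤ ε ≤ 1. Define the symmetric bilinear form B(u,v) = ⟨e(u), e(v)⟩ − ⟨s(u), j(v)⟩ − ⟨j(u), s(v)⟩ + ⟨j(u), j(v)⟩ and the seminorm ‖v‖_dG² = ‖e(v)‖² + ‖j(v)‖². Then for all u, v ∈ V: (i) B(v,v) ≥ (1 − ε)‖v‖_dG² (coercivity), and (ii) |B(u,v)| ≤ (1 + ε)‖u‖_dG ‖v‖_dG (continuity). -/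
open scoped RealInnerProductSpace

private lemma cs2 (A B C D : ℝ) (hA : 0 ≤ A) (hB : 0 ≤ B) (hC : 0 ≤ C) (hD : 0 ≤ D) :
    A * C + B * D ≤ Real.sqrt (A ^ 2 + B ^ 2) * Real.sqrt (C ^ 2 + D ^ 2) := by
  have h1 : A * C + B * D = Real.sqrt ((A * C + B * D) ^ 2) :=
    (Real.sqrt_sq (by positivity)).symm
  rw [h1, ← Real.sqrt_mul (by positivity)]
  apply Real.sqrt_le_sqrt
  nlinarith [sq_nonneg (A * D - B * C)]

/-- Abstract coercivity and continuity of the symmetric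
interior-penalty dG bilinear form
`B(u,v) = ⟨e u, e v⟩ − ⟨s u, j v⟩ − ⟨j u, s v⟩ + ⟨j u, j v⟩` with the dG
seminorm `‖v‖_dG² = ‖e v‖² + ‖j v‖²`, under the inverse-trace bound
`‖s v‖ ≤ ε ‖e v‖` with `0 ≤ ε ≤ 1`. -/
theorem dG_form_coercive_continuous
    {V : Type*} [AddCommGroup V] [Module ℝ V]
    {H : Type*} [NormedAddCommGroup H] [InnerProductSpace ℝ H]
    {G : Type*} [NormedAddCommGroup G] [InnerProductSpace ℝ G]
    (e : V →ₗ[ℝ] H) (s j : V →ₗ[ℝ] G)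
    (ε : ℝ) (hε₀ : 0 ≤ ε) (hε₁ : ε ≤ 1)
    (hs : ∀ v : V, ‖s v‖ ≤ ε * ‖e v‖) :
    (∀ v : V,
      ⟪e v, e v⟫ - ⟪s v, j v⟫ - ⟪j v, s v⟫ + ⟪j v, j v⟫
        ≥ (1 - ε) * (‖e v‖ ^ 2 + ‖j v‖ ^ 2)) ∧
    (∀ u v : V,
      |⟪e u, e v⟫ - ⟪s u, j v⟫ - ⟪j u, s v⟫ + ⟪j u, j v⟫|
        ≤ (1 + ε) * Real.sqrt (‖e u‖ ^ 2 + ‖j u‖ ^ 2)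
            * Real.sqrt (‖e v‖ ^ 2 + ‖j v‖ ^ 2)) := by
  constructor
  · intro v
    have h1 : ⟪e v, e v⟫ = ‖e v‖ ^ 2 := real_inner_self_eq_norm_sq (e v)
    have h2 : ⟪j v, j v⟫ = ‖j v‖ ^ 2 := real_inner_self_eq_norm_sq (j v)
    have h3 : |⟪s v, j v⟫| ≤ ‖s v‖ * ‖j v‖ := abs_real_inner_le_norm _ _
    have h4 : |⟪j v, s v⟫| ≤ ‖j v‖ * ‖s v‖ := abs_real_inner_le_norm _ _
    have h5 := hs v
    have h6 : (0:ℝ) ≤ ‖j v‖ := norm_nonneg _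
    have h7 : (0:ℝ) ≤ ‖e v‖ := norm_nonneg _
    have h3' := abs_le.mp h3
    have h4' := abs_le.mp h4
    nlinarith [sq_nonneg (‖e v‖ - ‖j v‖)]
  · intro u v
    have h1 : |⟪e u, e v⟫| ≤ ‖e u‖ * ‖e v‖ := abs_real_inner_le_norm _ _
    have h2 : |⟪s u, j v⟫| ≤ ‖s u‖ * ‖j v‖ := abs_real_inner_le_norm _ _
    have h3 : |⟪j u, s v⟫| ≤ ‖j u‖ * ‖s v‖ := abs_real_inner_le_norm _ _
    have h4 : |⟪j u, j v⟫| ≤ ‖j u‖ * ‖j v‖ := abs_real_inner_le_norm _ _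
    have hsu := hs u
    have hsv := hs v
    have cs1 := cs2 ‖e u‖ ‖j u‖ ‖e v‖ ‖j v‖ (norm_nonneg _) (norm_nonneg _)
      (norm_nonneg _) (norm_nonneg _)
    have cs2' := cs2 ‖e u‖ ‖j u‖ ‖j v‖ ‖e v‖ (norm_nonneg _) (norm_nonneg _)
      (norm_nonneg _) (norm_nonneg _)
    have hsw : ‖j v‖ ^ 2 + ‖e v‖ ^ 2 = ‖e v‖ ^ 2 + ‖j v‖ ^ 2 := by ring
    rw [hsw] at cs2'
    have hju : (0:ℝ) ≤ ‖j u‖ := norm_nonneg _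
    have hjv : (0:ℝ) ≤ ‖j v‖ := norm_nonneg _
    calc |⟪e u, e v⟫ - ⟪s u, j v⟫ - ⟪j u, s v⟫ + ⟪j u, j v⟫|
        ≤ |⟪e u, e v⟫| + |⟪s u, j v⟫| + |⟪j u, s v⟫| + |⟪j u, j v⟫| := by
          calc _ ≤ |⟪e u, e v⟫ - ⟪s u, j v⟫ - ⟪j u, s v⟫| + |⟪j u, j v⟫| := abs_add_le _ _
          _ ≤ |⟪e u, e v⟫ - ⟪s u, j v⟫| + |⟪j u, s v⟫| + |⟪j u, j v⟫| := by
                have := abs_sub (⟪e u, e v⟫ - ⟪s u, j v⟫) (⟪j u, s v⟫); linarith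
          _ ≤ _ := by have := abs_sub ⟪e u, e v⟫ ⟪s u, j v⟫; linarith
      _ ≤ (‖e u‖ * ‖e v‖ + ‖j u‖ * ‖j v‖) + ε * (‖e u‖ * ‖j v‖ + ‖j u‖ * ‖e v‖) := by
          nlinarith
      _ ≤ (1 + ε) * Real.sqrt (‖e u‖ ^ 2 + ‖j u‖ ^ 2) * Real.sqrt (‖e v‖ ^ 2 + ‖j v‖ ^ 2) := by
          nlinarith [Real.sqrt_nonneg (‖e u‖ ^ 2 + ‖j u‖ ^ 2),
            Real.sqrt_nonneg (‖e v‖ ^ 2 + ‖j v‖ ^ 2)]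
end
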